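/- arXiv:2209.06743 — 5 statements merged into one kernel-verified Lean document; each statement's English description precedes it below -/
import Mathlib

section
/- For all real numbers x with x not in πZ (or complex x avoiding the poles), one has 1/sin(x)^2 = Σ_{k∈Z} 1/(x + kπ)^2. -/
/-!
The doubling formula `1 / sin² y = (1 / sin² (y/2) + 1 / sin² (y/2 + π/2)) / 4`, iterated `n`
times, writes `1 / sin² x` as a finite sum of `2 ^ n` terms
`1 / (2 ^ n sin ((x + jπ) / 2 ^ n))²`; by `π`-periodicity of `sin²` the indices may be taken in a
window symmetric about `0`. As `n → ∞` each term tends to `1 / (x + jπ)²` since `sin t ~ t`, and for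
`x ∈ [0, π)` Jordan's inequality `|sin t| ≥ 2|t|/π` on `[-π/2, π/2]` bounds the terms in the window
by `(π/2)² / (x + jπ)²`, so Tannery's theorem passes to the limit. General `x` reduces to
`[0, π)` by a shift by a multiple of `π`.
-/

open Real Finset Filter Topology

theorem Finset.sum_Ico_add_sum_Ico {α M : Type*} [LinearOrder α] [LocallyFiniteOrder α]
    [AddCommMonoid M] (f : α → M) {a b c : α} (hab : a ≤ b) (hbc : b ≤ c) :
    ∑ i ∈ Ico a b, f i + ∑ i ∈ Ico b c, f i = ∑ i ∈ Ico a c, f i := by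
  rw [← sum_union (Ico_disjoint_Ico_consecutive a b c), Ico_union_Ico_eq_Ico hab hbc]

theorem Function.Periodic.sum_Ico_eq_sum_Ico_zero {M : Type*} [AddCommMonoid M] {f : ℤ → M}
    {T : ℤ} (hf : Function.Periodic f T) {a : ℤ} (hTa : -T ≤ a) (ha : a ≤ 0) :
    ∑ j ∈ Ico a (a + T), f j = ∑ j ∈ Ico 0 T, f j := by
  have hshift : ∑ j ∈ Ico a 0, f j = ∑ j ∈ Ico (a + T) T, f j := by
    simpa only [zero_add] using
      (sum_congr rfl fun j _ => (hf j).symm).trans (sum_Ico_add' f a 0 T)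
  rw [← sum_Ico_add_sum_Ico f ha (by omega), ← sum_Ico_add_sum_Ico f (by omega : 0 ≤ a + T)
    (by omega : a + T ≤ T), hshift, add_comm]

theorem Real.sin_eq_mul_sinc (x : ℝ) : sin x = x * sinc x := by
  rcases eq_or_ne x 0 with rfl | hx
  · simp
  · rw [sinc_of_ne_zero hx, mul_div_cancel₀ _ hx]

theorem Real.two_div_pi_le_abs_sinc {x : ℝ} (hx : |x| ≤ π / 2) : 2 / π ≤ |sinc x| := by
  rcases eq_or_ne x 0 with rfl | hx0
  · rw [sinc_zero, abs_one, div_le_one pi_pos]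
    linarith [pi_gt_three]
  · rw [sinc_of_ne_zero hx0, abs_div, le_div_iff₀ (abs_pos.mpr hx0)]
    exact mul_abs_le_abs_sin hx

theorem one_div_sin_sq_eq_add {y : ℝ} (hy : sin y ≠ 0) :
    1 / sin y ^ 2 = (1 / sin (y / 2) ^ 2 + 1 / sin (y / 2 + π / 2) ^ 2) / 4 := by
  have hdouble : sin y = 2 * sin (y / 2) * cos (y / 2) := by
    rw [← sin_two_mul, mul_div_cancel₀ _ two_ne_zero]
  have hs : sin (y / 2) ≠ 0 := fun h => hy (by rw [hdouble, h]; ring)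
  have hc : cos (y / 2) ≠ 0 := fun h => hy (by rw [hdouble, h]; ring)
  rw [sin_add_pi_div_two, hdouble]
  field_simp
  linear_combination -4 * sin_sq_add_cos_sq (y / 2)

noncomputable def dyadicCscSq (x : ℝ) (n : ℕ) (j : ℤ) : ℝ :=
  1 / (2 ^ n * sin ((x + j * π) / 2 ^ n)) ^ 2

theorem dyadicCscSq_zero_zero (x : ℝ) : dyadicCscSq x 0 0 = 1 / sin x ^ 2 := by
  simp [dyadicCscSq]

theorem dyadicCscSq_periodic (x : ℝ) (n : ℕ) : Function.Periodic (dyadicCscSq x n) (2 ^ n) := by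
  intro j
  have harg : (x + ↑(j + 2 ^ n) * π) / 2 ^ n = (x + j * π) / 2 ^ n + π := by
    push_cast; field_simp; ring
  rw [dyadicCscSq, harg, sin_add_pi, mul_neg, neg_sq, dyadicCscSq]

theorem dyadicCscSq_eq_add {x : ℝ} {n : ℕ} {j : ℤ} (h : sin ((x + j * π) / 2 ^ n) ≠ 0) :
    dyadicCscSq x n j = dyadicCscSq x (n + 1) j + dyadicCscSq x (n + 1) (j + 2 ^ n) := by
  have h₁ : (x + j * π) / 2 ^ n / 2 = (x + j * π) / 2 ^ (n + 1) := by
    rw [div_div, pow_succ]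
  have h₂ : (x + j * π) / 2 ^ (n + 1) + π / 2 = (x + ↑(j + 2 ^ n) * π) / 2 ^ (n + 1) := by
    push_cast; field_simp; ring
  rw [dyadicCscSq, mul_pow, div_mul_eq_div_div_swap, one_div_sin_sq_eq_add h, h₁, h₂,
    dyadicCscSq, dyadicCscSq]
  ring

theorem sin_add_int_mul_pi_div_two_pow_ne_zero {x : ℝ} (hx : ∀ k : ℤ, x ≠ k * π) (j : ℤ)
    (n : ℕ) : sin ((x + j * π) / 2 ^ n) ≠ 0 := by
  rw [Ne, sin_eq_zero_iff]
  rintro ⟨k, hk⟩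
  apply hx (k * 2 ^ n - j)
  rw [eq_div_iff (by positivity)] at hk
  push_cast
  linear_combination -hk

theorem sum_Ico_zero_dyadicCscSq {x : ℝ} (hx : ∀ k : ℤ, x ≠ k * π) (n : ℕ) :
    ∑ j ∈ Ico 0 (2 ^ n), dyadicCscSq x n j = 1 / sin x ^ 2 := by
  induction n with
  | zero => rw [pow_zero, show Ico (0 : ℤ) 1 = {0} from rfl, sum_singleton, dyadicCscSq_zero_zero]
  | succ n ih =>
    have hupper : ∑ j ∈ Ico (2 ^ n) (2 ^ (n + 1)), dyadicCscSq x (n + 1) j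
        = ∑ j ∈ Ico 0 (2 ^ n), dyadicCscSq x (n + 1) (j + 2 ^ n) := by
      rw [sum_Ico_add', zero_add, pow_succ, mul_two]
    rw [← sum_Ico_add_sum_Ico _ (by positivity) (pow_le_pow_right₀ one_le_two n.le_succ),
      hupper, ← sum_add_distrib, ← ih]
    exact sum_congr rfl fun j _ =>
      (dyadicCscSq_eq_add (sin_add_int_mul_pi_div_two_pow_ne_zero hx j n)).symm

theorem sum_Ico_neg_dyadicCscSq {x : ℝ} (hx : ∀ k : ℤ, x ≠ k * π) (n : ℕ) :
    ∑ j ∈ Ico (-2 ^ n) (2 ^ n), dyadicCscSq x (n + 1) j = 1 / sin x ^ 2 := by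
  have hwindow : (-2 ^ n : ℤ) + 2 ^ (n + 1) = 2 ^ n := by ring
  rw [← sum_Ico_zero_dyadicCscSq hx (n + 1),
    ← (dyadicCscSq_periodic x (n + 1)).sum_Ico_eq_sum_Ico_zero (a := -2 ^ n)
      (by rw [pow_succ]; linarith [(by positivity : (0 : ℤ) < 2 ^ n)]) (by simp), hwindow]

theorem two_pow_mul_sin_div_two_pow (X : ℝ) (n : ℕ) :
    2 ^ n * sin (X / 2 ^ n) = X * sinc (X / 2 ^ n) := by
  rw [sin_eq_mul_sinc, ← mul_assoc, mul_div_cancel₀ _ (by positivity)]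

theorem dyadicCscSq_nonneg (x : ℝ) (n : ℕ) (j : ℤ) : 0 ≤ dyadicCscSq x n j := by
  unfold dyadicCscSq; positivity

theorem tendsto_dyadicCscSq {x : ℝ} {j : ℤ} (hX : x + j * π ≠ 0) :
    Tendsto (dyadicCscSq x · j) atTop (𝓝 (1 / (x + j * π) ^ 2)) := by
  simp only [dyadicCscSq, two_pow_mul_sin_div_two_pow]
  have hsmall : Tendsto (fun n : ℕ => (x + j * π) / 2 ^ n) atTop (𝓝 0) :=
    tendsto_const_nhds.div_atTop (tendsto_pow_atTop_atTop_of_one_lt one_lt_two)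
  have hsinc := (continuous_sinc.tendsto 0).comp hsmall
  rw [sinc_zero] at hsinc
  simpa only [mul_one, one_div, Function.comp_def] using
    ((tendsto_const_nhds (x := x + j * π)).mul hsinc).pow 2 |>.inv₀ (by simpa using hX)

theorem dyadicCscSq_le {x : ℝ} {n : ℕ} {j : ℤ} (h : |x + j * π| ≤ 2 ^ n * π / 2) :
    dyadicCscSq x n j ≤ (π / 2) ^ 2 * (1 / (x + j * π) ^ 2) := by
  set X := x + j * π
  have hsinc : 2 / π ≤ |sinc (X / 2 ^ n)| := by
    refine two_div_pi_le_abs_sinc ?_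
    rw [abs_div, abs_of_pos (by positivity : (0 : ℝ) < 2 ^ n), div_le_iff₀ (by positivity)]
    linarith
  have hinv : 1 / sinc (X / 2 ^ n) ^ 2 ≤ (π / 2) ^ 2 := by
    have hpos : 0 < |sinc (X / 2 ^ n)| := (by positivity : (0 : ℝ) < 2 / π).trans_le hsinc
    rw [← sq_abs, div_le_iff₀ (by positivity)]
    calc (1 : ℝ) = (π / 2) ^ 2 * (2 / π) ^ 2 := by field_simp
      _ ≤ _ := by gcongr
  rw [dyadicCscSq, two_pow_mul_sin_div_two_pow, mul_pow, ← one_div_mul_one_div, mul_comm]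
  gcongr

theorem summable_one_div_add_int_mul_sq (x : ℝ) {c : ℝ} (hc : c ≠ 0) :
    Summable fun k : ℤ => 1 / (x + k * c) ^ 2 := by
  refine (((summable_one_div_int_add_rpow (x / c) 2).mpr one_lt_two).mul_left (1 / c ^ 2)).congr
    fun k => ?_
  rw [rpow_two, sq_abs]
  field_simp
  ring

theorem one_div_sin_sq_eq_tsum_of_mem_Ico {x : ℝ} (hx : ∀ k : ℤ, x ≠ k * π) (hx₀ : 0 ≤ x)
    (hxπ : x < π) : 1 / sin x ^ 2 = ∑' k : ℤ, 1 / (x + k * π) ^ 2 := by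
  set F : ℕ → ℤ → ℝ := fun n => Set.indicator ↑(Ico (-2 ^ n) (2 ^ n)) (dyadicCscSq x (n + 1))
  have hF : ∀ n, ∑' j, F n j = 1 / sin x ^ 2 := fun n => by
    rw [← _root_.tsum_subtype, Finset.tsum_subtype', sum_Ico_neg_dyadicCscSq hx n]
  have hlim (j : ℤ) : Tendsto (F · j) atTop (𝓝 (1 / (x + j * π) ^ 2)) := by
    have hX : x + j * π ≠ 0 := fun h => hx (-j) (by push_cast; linarith)
    refine ((tendsto_add_atTop_iff_nat 1).mpr (tendsto_dyadicCscSq hX)).congr' ?_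
    filter_upwards [(tendsto_pow_atTop_atTop_of_one_lt (one_lt_two : (1 : ℤ) < 2))
      |>.eventually_gt_atTop |j|] with n hn
    simp only [F]
    rw [Set.indicator_of_mem (mem_coe.mpr (mem_Ico.mpr ⟨(abs_lt.mp hn).1.le, (abs_lt.mp hn).2⟩))]
  have hbound (n : ℕ) (j : ℤ) : ‖F n j‖ ≤ (π / 2) ^ 2 * (1 / (x + j * π) ^ 2) := by
    simp only [F]
    by_cases hj : j ∈ Ico (-2 ^ n) (2 ^ n)
    · rw [Set.indicator_of_mem (by exact_mod_cast hj), norm_of_nonneg (dyadicCscSq_nonneg ..)]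
      obtain ⟨hlo, hhi⟩ := mem_Ico.mp hj
      have hlo' : -(2 : ℝ) ^ n ≤ j := by exact_mod_cast hlo
      have hhi' : (j : ℝ) + 1 ≤ 2 ^ n := by exact_mod_cast hhi
      refine dyadicCscSq_le (abs_le.mpr ⟨?_, ?_⟩) <;> rw [pow_succ] <;>
        nlinarith [mul_le_mul_of_nonneg_right hlo' pi_pos.le,
          mul_le_mul_of_nonneg_right hhi' pi_pos.le]
    · rw [Set.indicator_of_notMem (by exact_mod_cast hj), norm_zero]
      positivity
  exact tendsto_nhds_unique (by simp only [hF]; exact tendsto_const_nhds)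
    (tendsto_tsum_of_dominated_convergence
      ((summable_one_div_add_int_mul_sq x pi_ne_zero).mul_left _) hlim (.of_forall hbound))

/-- Mittag-Leffler expansion of the squared cosecant: for real `x` not a multiple of `π`,
`1 / sin(x)^2 = ∑_{k ∈ ℤ} 1 / (x + kπ)^2`. -/
theorem cosecant_squared_expansion (x : ℝ) (hx : ∀ k : ℤ, x ≠ (k : ℝ) * Real.pi) :
    1 / Real.sin x ^ 2 = ∑' k : ℤ, 1 / (x + (k : ℝ) * Real.pi) ^ 2 := by
  obtain ⟨hy₀, hyπ⟩ := toIcoMod_mem_Ico pi_pos 0 x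
  set y := toIcoMod pi_pos 0 x
  set m := toIcoDiv pi_pos 0 x
  have hxy : x = y + m * π := by rw [← toIcoMod_add_toIcoDiv_zsmul pi_pos 0 x, zsmul_eq_mul]
  have hy : ∀ k : ℤ, y ≠ k * π := fun k h => hx (k + m) (by rw [hxy, h]; push_cast; ring)
  have hsin : sin x ^ 2 = sin y ^ 2 := by
    simpa only [sq, Pi.mul_apply, ← hxy] using
      (sin_antiperiodic.mul sin_antiperiodic).int_mul m y
  rw [hsin, one_div_sin_sq_eq_tsum_of_mem_Ico hy hy₀ (by simpa using hyπ),
    ← (Equiv.addRight m).tsum_eq]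
  congr! 2 with k
  simp only [Equiv.coe_addRight, hxy]
  push_cast
  ring
end

section
/- Let Q be a polynomial of degree k ≥ 1 and m ≥ 2 a natural number. Then max over |z|=1 of |Q(z)|^2 is at most (m/(m-1)) times the maximum of |Q(ω)|^2 over all (2mk)-th roots of unity ω. -/
/-!
Write `n F_n(u) = |∑_{a<n} u^a|²` for the Fejér kernel `F_n`, and let `ζ` be a primitive `N`-th
root of unity. If `deg P ≤ d ≤ n` and `d + n ≤ N`, expanding both squares and using the
orthogonality of the powers of `ζ` (all exponents are `< N`) gives the quadrature rule
`∑_t |P(ζ^t)|² n F_n(z ζ^{-t}) = N ∑_{p,q ≤ d} c_p c̄_q z^p z̄^q (n - |p - q|)` for `|z| = 1`.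
Only the term `n |P(z)|²` depends on `n`. With `N = 2mk`, the difference of the rules for
`n = km` and `n = k` reads
`N k (m - 1) |Q(z)|² = ∑_t |Q(ζ^t)|² (km F_{km} - k F_k)(z ζ^{-t}) ≤ max |Q(ω)|² · ∑_t km F_{km}`,
and the last sum is `N km` by the rule for `P = 1`.
-/

open Finset Complex Polynomial ComplexConjugate

theorem IsPrimitiveRoot.sum_pow_mul_conj_pow {N : ℕ} {ζ : ℂ} (hζ : IsPrimitiveRoot ζ N)
    {i j : ℕ} (hi : i < N) (hj : j < N) :
    ∑ t ∈ range N, (ζ ^ t) ^ i * conj (ζ ^ t) ^ j = if i = j then (N : ℂ) else 0 := by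
  have hN : N ≠ 0 := by omega
  have hζ0 : ζ ≠ 0 := hζ.ne_zero hN
  have hconj : conj ζ = ζ⁻¹ :=
    (inv_eq_conj (norm_eq_one_of_pow_eq_one hζ.pow_eq_one hN)).symm
  have hterm : ∀ t : ℕ, (ζ ^ t) ^ i * conj (ζ ^ t) ^ j = (ζ ^ ((i : ℤ) - j)) ^ t := by
    intro t
    rw [map_pow, hconj, zpow_sub₀ hζ0, zpow_natCast, zpow_natCast, div_pow, div_eq_mul_inv,
      ← inv_pow, ← inv_pow, ← pow_mul, ← pow_mul, ← pow_mul, ← pow_mul, mul_comm i, mul_comm j]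
  simp_rw [hterm]
  split_ifs with hij
  · simp [hij]
  · have hne : ζ ^ ((i : ℤ) - j) ≠ 1 := by
      rw [Ne, hζ.zpow_eq_one_iff_dvd]
      intro hdvd
      have := Int.eq_zero_of_abs_lt_dvd hdvd (by rw [abs_lt]; omega)
      omega
    rw [geom_sum_eq hne, ← zpow_natCast, ← zpow_mul, mul_comm, zpow_mul, zpow_natCast,
      hζ.pow_eq_one, one_zpow, sub_self, zero_div]

theorem card_filter_add_eq_add_add_dist {n p q : ℕ} (h : Nat.dist p q ≤ n) :
    #{ab ∈ range n ×ˢ range n | p + ab.2 = q + ab.1} + Nat.dist p q = n := by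
  wlog hqp : q ≤ p generalizing p q
  · have hswap := this (Nat.dist_comm p q ▸ h) (by omega)
    rw [Nat.dist_comm] at hswap
    rw [← hswap]
    congr 1
    refine card_equiv (Equiv.prodComm ℕ ℕ) fun ab => ?_
    simp only [mem_filter, mem_product, mem_range, Equiv.prodComm_apply, Prod.fst_swap,
      Prod.snd_swap]
    omega
  have hfilter : {ab ∈ range n ×ˢ range n | p + ab.2 = q + ab.1}
      = (range (n - (p - q))).image fun b => (b + (p - q), b) := by
    ext ⟨a, b⟩
    simp only [mem_filter, mem_product, mem_range, mem_image, Prod.mk.injEq]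
    constructor
    · rintro ⟨⟨ha, hb⟩, he⟩
      exact ⟨b, by omega, by omega, rfl⟩
    · rintro ⟨b', hb', rfl, rfl⟩
      omega
  rw [hfilter, card_image_of_injective _ fun b b' h => (Prod.ext_iff.1 h).2, card_range]
  unfold Nat.dist at h ⊢
  omega

theorem pow_mul_conj_pow_eq_of_add_eq {z : ℂ} (hz : ‖z‖ = 1) {a b p q : ℕ} (h : p + b = q + a) :
    z ^ a * conj z ^ b = z ^ p * conj z ^ q := by
  have hz0 : z ≠ 0 := norm_ne_zero_iff.1 (by rw [hz]; exact one_ne_zero)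
  rw [← inv_eq_conj hz, inv_pow, inv_pow, ← div_eq_mul_inv, ← div_eq_mul_inv,
    div_eq_div_iff (pow_ne_zero _ hz0) (pow_ne_zero _ hz0), ← pow_add, ← pow_add, add_comm a, h,
    add_comm]

theorem normSq_eval_eq_sum {P : ℂ[X]} {d : ℕ} (hP : P.natDegree ≤ d) (w : ℂ) :
    (normSq (P.eval w) : ℂ) = ∑ p ∈ range (d + 1), ∑ q ∈ range (d + 1),
      P.coeff p * conj (P.coeff q) * (w ^ p * conj w ^ q) := by
  rw [← mul_conj, eval_eq_sum_range' (Nat.lt_add_one_of_le hP), map_sum, sum_mul_sum]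
  refine sum_congr rfl fun p _ => sum_congr rfl fun q _ => ?_
  rw [map_mul, map_pow]
  ring

/-- `n` times the Fejér kernel `F_n`. -/
noncomputable def scaledFejerKernel (n : ℕ) (u : ℂ) : ℝ :=
  normSq (∑ a ∈ range n, u ^ a)

theorem scaledFejerKernel_nonneg (n : ℕ) (u : ℂ) : 0 ≤ scaledFejerKernel n u :=
  normSq_nonneg _

theorem normSq_eval_mul_scaledFejerKernel_eq_sum {P : ℂ[X]} {d : ℕ} (hP : P.natDegree ≤ d) (n : ℕ)
    (z w : ℂ) :
    ((normSq (P.eval w) * scaledFejerKernel n (z * conj w) : ℝ) : ℂ) =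
      ∑ p ∈ range (d + 1), ∑ q ∈ range (d + 1), ∑ a ∈ range n, ∑ b ∈ range n,
        P.coeff p * conj (P.coeff q) * (z ^ a * conj z ^ b) * (w ^ (p + b) * conj w ^ (q + a)) := by
  have hkernel : (scaledFejerKernel n (z * conj w) : ℂ) =
      ∑ a ∈ range n, ∑ b ∈ range n, (z ^ a * conj z ^ b) * (w ^ b * conj w ^ a) := by
    rw [scaledFejerKernel, ← mul_conj, map_sum, sum_mul_sum]
    refine sum_congr rfl fun a _ => sum_congr rfl fun b _ => ?_
    simp only [map_pow, map_mul, conj_conj, mul_pow]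
    ring
  rw [ofReal_mul, normSq_eval_eq_sum hP, hkernel]
  simp only [sum_mul]
  simp only [mul_sum]
  refine sum_congr rfl fun p _ => sum_congr rfl fun q _ =>
    sum_congr rfl fun a _ => sum_congr rfl fun b _ => by ring

theorem sum_normSq_eval_mul_scaledFejerKernel {N : ℕ} {ζ : ℂ} (hζ : IsPrimitiveRoot ζ N)
    {P : ℂ[X]} {d n : ℕ} (hP : P.natDegree ≤ d) (hdn : d + n ≤ N) {z : ℂ} (hz : ‖z‖ = 1) :
    ((∑ t ∈ range N, normSq (P.eval (ζ ^ t)) * scaledFejerKernel n (z * conj (ζ ^ t)) : ℝ) : ℂ) =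
      N * ∑ p ∈ range (d + 1), ∑ q ∈ range (d + 1), P.coeff p * conj (P.coeff q) *
        (z ^ p * conj z ^ q) * #{ab ∈ range n ×ˢ range n | p + ab.2 = q + ab.1} := by
  rw [ofReal_sum]
  simp_rw [normSq_eval_mul_scaledFejerKernel_eq_sum hP, mul_sum]
  rw [sum_comm]
  refine sum_congr rfl fun p hp => ?_
  rw [sum_comm]
  refine sum_congr rfl fun q hq => ?_
  rw [mem_range] at hp hq
  calc _ = ∑ a ∈ range n, ∑ b ∈ range n, ∑ t ∈ range N,
          P.coeff p * conj (P.coeff q) * (z ^ a * conj z ^ b) *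
            ((ζ ^ t) ^ (p + b) * conj (ζ ^ t) ^ (q + a)) := by
        rw [sum_comm]
        exact sum_congr rfl fun a _ => sum_comm
    _ = ∑ a ∈ range n, ∑ b ∈ range n,
          if p + b = q + a then N * (P.coeff p * conj (P.coeff q) * (z ^ p * conj z ^ q))
          else 0 := by
        refine sum_congr rfl fun a ha => sum_congr rfl fun b hb => ?_
        rw [mem_range] at ha hb
        rw [← mul_sum, hζ.sum_pow_mul_conj_pow (by omega) (by omega)]
        split_ifs with h
        · rw [pow_mul_conj_pow_eq_of_add_eq hz h]
          ring
        · rw [mul_zero]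
    _ = _ := by
        rw [← sum_product', sum_ite, sum_const_zero, add_zero, sum_const, nsmul_eq_mul]
        ring

theorem sum_normSq_eval_mul_scaledFejerKernel_sub {N : ℕ} {ζ : ℂ} (hζ : IsPrimitiveRoot ζ N)
    {P : ℂ[X]} {d n₁ n₂ : ℕ} (hP : P.natDegree ≤ d) (h₁ : d ≤ n₁) (h₁₂ : n₁ ≤ n₂)
    (h₂ : d + n₂ ≤ N) {z : ℂ} (hz : ‖z‖ = 1) :
    ∑ t ∈ range N, normSq (P.eval (ζ ^ t)) *
        (scaledFejerKernel n₂ (z * conj (ζ ^ t)) - scaledFejerKernel n₁ (z * conj (ζ ^ t))) =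
      N * ((n₂ : ℝ) - n₁) * normSq (P.eval z) := by
  have hcount : ∀ n, d ≤ n → ∀ p ∈ range (d + 1), ∀ q ∈ range (d + 1),
      (#{ab ∈ range n ×ˢ range n | p + ab.2 = q + ab.1} : ℂ) = n - Nat.dist p q := by
    intro n hn p hp q hq
    rw [mem_range] at hp hq
    have hdist : Nat.dist p q ≤ n := by unfold Nat.dist; omega
    rw [eq_sub_iff_add_eq]
    exact_mod_cast card_filter_add_eq_add_add_dist hdist
  simp only [mul_sub, sum_sub_distrib]
  apply ofReal_injective
  rw [ofReal_sub, sum_normSq_eval_mul_scaledFejerKernel hζ hP h₂ hz,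
    sum_normSq_eval_mul_scaledFejerKernel hζ hP (by omega) hz, ← mul_sub]
  push_cast
  rw [normSq_eval_eq_sum hP, ← sum_sub_distrib, mul_sum, mul_sum]
  refine sum_congr rfl fun p hp => ?_
  rw [← sum_sub_distrib, mul_sum, mul_sum]
  refine sum_congr rfl fun q hq => ?_
  rw [hcount n₂ (by omega) p hp q hq, hcount n₁ h₁ p hp q hq]
  ring

theorem sum_scaledFejerKernel {N : ℕ} {ζ : ℂ} (hζ : IsPrimitiveRoot ζ N) {n : ℕ} (hn : n ≤ N)
    {z : ℂ} (hz : ‖z‖ = 1) :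
    ∑ t ∈ range N, scaledFejerKernel n (z * conj (ζ ^ t)) = N * n := by
  simpa [scaledFejerKernel] using sum_normSq_eval_mul_scaledFejerKernel_sub hζ (P := 1)
    natDegree_one.le (Nat.zero_le 0) (Nat.zero_le n) (by omega) hz

theorem mul_normSq_eval_le_of_forall_le {N : ℕ} {ζ : ℂ} (hζ : IsPrimitiveRoot ζ N)
    {P : ℂ[X]} {d n₁ n₂ : ℕ} (hP : P.natDegree ≤ d) (h₁ : d ≤ n₁) (h₁₂ : n₁ ≤ n₂)
    (h₂ : d + n₂ ≤ N) {z : ℂ} (hz : ‖z‖ = 1) {M : ℝ}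
    (hM : ∀ t, normSq (P.eval (ζ ^ t)) ≤ M) :
    N * ((n₂ : ℝ) - n₁) * normSq (P.eval z) ≤ M * (N * n₂) :=
  calc _ = ∑ t ∈ range N, normSq (P.eval (ζ ^ t)) *
          (scaledFejerKernel n₂ (z * conj (ζ ^ t)) - scaledFejerKernel n₁ (z * conj (ζ ^ t))) :=
        (sum_normSq_eval_mul_scaledFejerKernel_sub hζ hP h₁ h₁₂ h₂ hz).symm
    _ ≤ ∑ t ∈ range N, M * scaledFejerKernel n₂ (z * conj (ζ ^ t)) := by
        refine sum_le_sum fun t _ => ?_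
        calc _ ≤ normSq (P.eval (ζ ^ t)) * scaledFejerKernel n₂ (z * conj (ζ ^ t)) :=
              mul_le_mul_of_nonneg_left (sub_le_self _ (scaledFejerKernel_nonneg _ _))
                (normSq_nonneg _)
          _ ≤ _ := mul_le_mul_of_nonneg_right (hM t) (scaledFejerKernel_nonneg _ _)
    _ = M * (N * n₂) := by rw [← mul_sum, sum_scaledFejerKernel hζ (by omega) hz]

theorem bddAbove_setOf_pow_eq_one (f : ℂ → ℝ) {N : ℕ} (hN : N ≠ 0) :
    BddAbove {y | ∃ ω : ℂ, ω ^ N = 1 ∧ y = f ω} := by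
  refine ((nthRootsFinset N (1 : ℂ)).finite_toSet.image f).bddAbove.mono ?_
  rintro _ ⟨ω, hω, rfl⟩
  exact ⟨ω, (mem_nthRootsFinset (Nat.pos_of_ne_zero hN) 1).2 hω, rfl⟩

/-- For a polynomial `Q` of degree `k ≥ 1` and `m ≥ 2`, the maximum of `|Q(z)|²` over the unit
circle is at most `m/(m-1)` times the maximum of `|Q(ω)|²` over the `2mk`-th roots of unity. -/
theorem max_circle_le_roots_of_unity (k m : ℕ) (hk : 1 ≤ k) (hm : 2 ≤ m)
    (Q : Polynomial ℂ) (hQ : Q.natDegree ≤ k) (z : ℂ) (hz : ‖z‖ = 1) :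
    ‖Q.eval z‖ ^ 2 ≤
      ((m : ℝ) / ((m : ℝ) - 1)) *
        sSup {y : ℝ | ∃ ω : ℂ, ω ^ (2 * m * k) = 1 ∧ y = ‖Q.eval ω‖ ^ 2} := by
  have hN : 2 * m * k ≠ 0 := Nat.mul_ne_zero (by omega) (by omega)
  obtain ⟨ζ, hζ⟩ : ∃ ζ : ℂ, IsPrimitiveRoot ζ (2 * m * k) := ⟨_, isPrimitiveRoot_exp _ hN⟩
  set M := sSup {y : ℝ | ∃ ω : ℂ, ω ^ (2 * m * k) = 1 ∧ y = ‖Q.eval ω‖ ^ 2}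
  have hM (t : ℕ) : normSq (Q.eval (ζ ^ t)) ≤ M := by
    refine le_csSup (bddAbove_setOf_pow_eq_one _ hN) ⟨ζ ^ t, ?_, normSq_eq_norm_sq _⟩
    rw [← pow_mul, mul_comm, pow_mul, hζ.pow_eq_one, one_pow]
  have hkm : k ≤ k * m := Nat.le_mul_of_pos_right k (by omega)
  have key := mul_normSq_eval_le_of_forall_le hζ hQ le_rfl hkm (by nlinarith) hz hM
  have hNk : (0 : ℝ) < 2 * m * k * k := by positivity
  have hm1 : (0 : ℝ) < m - 1 := by
    have : (2 : ℝ) ≤ m := by exact_mod_cast hm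
    linarith
  rw [← normSq_eq_norm_sq, div_mul_eq_mul_div, le_div_iff₀ hm1]
  push_cast at key
  nlinarith
end

section
/- Bernstein's inequality: for any polynomial Q of degree k ≥ 1, the maximum of |Q'(z)| over the unit circle |z| = 1 is at most k times the maximum of |Q(z)| over the unit circle. -/
open Polynomial

lemma half_lt_re_inv_one_sub {w : ℂ} (hw : ‖w‖ < 1) :
    (1:ℝ)/2 < (((1:ℂ) - w)⁻¹).re := by
  have hns : Complex.normSq w < 1 := by
    have := Complex.sq_norm w
    nlinarith [norm_nonneg w]
  have hne : Complex.normSq (1 - w) > 0 := by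
    have : (1:ℂ) - w ≠ 0 := by
      intro h
      have : w = 1 := by linear_combination -h
      simp [this] at hw
    exact Complex.normSq_pos.2 this
  rw [Complex.inv_re]
  rw [div_lt_div_iff₀ (by norm_num) hne]
  simp only [Complex.normSq_apply, Complex.sub_re, Complex.sub_im, Complex.one_re,
    Complex.one_im] at *
  nlinarith

lemma half_lt_re_div {z r : ℂ} (hz : ‖z‖ = 1) (hr : ‖r‖ < 1) :
    (1:ℝ)/2 < (z / (z - r)).re := by
  have hz0 : z ≠ 0 := by intro h; simp [h] at hz
  have hzr : z - r ≠ 0 := by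
    intro h
    have : z = r := by linear_combination h
    rw [this] at hz; linarith
  have habs : ‖r * z⁻¹‖ < 1 := by
    rw [norm_mul, norm_inv, hz]; simpa using hr
  have key : z / (z - r) = ((1:ℂ) - r * z⁻¹)⁻¹ := by
    have h1 : (1:ℂ) - r * z⁻¹ = (z - r) / z := by field_simp
    rw [h1, inv_div]
  rw [key]
  exact half_lt_re_inv_one_sub habs

lemma roots_re_bound (z : ℂ) (hz : ‖z‖ = 1) (s : Multiset ℂ)
    (hs : ∀ r ∈ s, ‖r‖ < 1) :
    ((s.map fun r => X - C r).prod.eval z ≠ 0) ∧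
      (s.card : ℝ)/2 ≤ (z * (derivative (s.map fun r => X - C r).prod).eval z /
        (s.map fun r => X - C r).prod.eval z).re := by
  induction s using Multiset.induction with
  | empty => simp
  | cons r s ih =>
    obtain ⟨hq, hre⟩ := ih (fun a ha => hs a (Multiset.mem_cons_of_mem ha))
    have hr : ‖r‖ < 1 := hs r (Multiset.mem_cons_self r s)
    have hzr : z - r ≠ 0 := by
      intro h
      have : z = r := by linear_combination h
      rw [this] at hz; linarith
    set q := (s.map fun a => X - C a).prod with hqdef
    have hprod : ((r ::ₘ s).map fun a => X - C a).prod = (X - C r) * q := by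
      rw [Multiset.map_cons, Multiset.prod_cons]
    rw [hprod]
    constructor
    · simp only [eval_mul, eval_sub, eval_X, eval_C]
      exact mul_ne_zero hzr hq
    · have hd : derivative ((X - C r) * q) = q + (X - C r) * derivative q := by
        rw [derivative_mul]; simp
      rw [hd]
      have hsplit : z * (q + (X - C r) * derivative q).eval z / ((X - C r) * q).eval z
          = z / (z - r) + z * (derivative q).eval z / q.eval z := by
        simp only [eval_mul, eval_add, eval_sub, eval_X, eval_C]
        field_simp
      rw [hsplit, Complex.add_re, Multiset.card_cons]
      push_cast
      have := half_lt_re_div hz hr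
      linarith

lemma reflect_eval (k : ℕ) (Q : Polynomial ℂ) (hQ : Q.natDegree ≤ k) {w : ℂ} (hw : w ≠ 0) :
    (∑ i ∈ Finset.range (k+1), C (Q.coeff i) * X^(k-i)).eval w = w^k * Q.eval w⁻¹ := by
  rw [eval_finset_sum, eval_eq_sum_range' (Nat.lt_succ_of_le hQ), Finset.mul_sum]
  refine Finset.sum_congr rfl fun i hi => ?_
  simp only [Finset.mem_range, Nat.lt_succ_iff] at hi
  simp only [eval_mul, eval_C, eval_pow, eval_X]
  rw [pow_sub₀ w hw hi, inv_pow]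
  ring

lemma max_mod_bound (k : ℕ) (Q : Polynomial ℂ) (hQ : Q.natDegree ≤ k) (M : ℝ)
    (hM : ∀ w : ℂ, ‖w‖ = 1 → ‖Q.eval w‖ ≤ M) :
    (∀ w : ℂ, ‖w‖ ≤ 1 →
      ‖(∑ i ∈ Finset.range (k+1), C (Q.coeff i) * X^(k-i)).eval w‖ ≤ M) := by
  intro w hw
  set R := ∑ i ∈ Finset.range (k+1), C (Q.coeff i) * X^(k-i) with hR
  have hdiff : Differentiable ℂ fun z => R.eval z := R.differentiable
  have key : ∀ u ∈ frontier (Metric.ball (0:ℂ) 1), ‖R.eval u‖ ≤ M := by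
    intro u hu
    rw [frontier_ball (0:ℂ) one_ne_zero, mem_sphere_zero_iff_norm] at hu
    have hu0 : u ≠ 0 := by intro h; simp [h] at hu
    have : ‖u‖ = 1 := hu
    rw [reflect_eval k Q hQ hu0, norm_mul, norm_pow, this, one_pow, one_mul]
    exact hM u⁻¹ (by rw [norm_inv, this, inv_one])
  have hcl : w ∈ closure (Metric.ball (0:ℂ) 1) := by
    rw [closure_ball (0:ℂ) one_ne_zero, Metric.mem_closedBall]
    simpa [Complex.dist_eq] using hw
  exact Complex.norm_le_of_forall_mem_frontier_norm_le (Metric.isBounded_ball)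
    hdiff.diffContOnCl key hcl

lemma growth_bound (k : ℕ) (Q : Polynomial ℂ) (hQ : Q.natDegree ≤ k) (M : ℝ)
    (hM : ∀ w : ℂ, ‖w‖ = 1 → ‖Q.eval w‖ ≤ M) :
    (∀ w : ℂ, 1 ≤ ‖w‖ → ‖Q.eval w‖ ≤ M * ‖w‖ ^ k)
      ∧ ‖Q.coeff k‖ ≤ M := by
  have hRb := max_mod_bound k Q hQ M hM
  constructor
  · intro w hw
    have hw0 : w ≠ 0 := by intro h; simp [h] at hw; linarith
    have hinv : ‖w⁻¹‖ ≤ 1 := by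
      rw [norm_inv]; exact inv_le_one_of_one_le₀ hw
    have := hRb w⁻¹ hinv
    rw [reflect_eval k Q hQ (inv_ne_zero hw0), norm_mul, norm_pow, norm_inv, inv_inv] at this
    have hpos : 0 < ‖w‖ ^ k := pow_pos (by linarith) k
    rw [inv_pow] at this
    have h2 : (‖w‖ ^ k)⁻¹ * ‖Q.eval w‖ ≤ M := this
    calc ‖Q.eval w‖
        = (‖w‖ ^ k)⁻¹ * ‖Q.eval w‖ * ‖w‖ ^ k := by
          field_simp
      _ ≤ M * ‖w‖ ^ k := by
          exact mul_le_mul_of_nonneg_right h2 (le_of_lt hpos)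
  · have := hRb 0 (by simp)
    have he : (∑ i ∈ Finset.range (k+1), C (Q.coeff i) * X^(k-i)).eval 0 = Q.coeff k := by
      rw [eval_finset_sum]
      rw [Finset.sum_eq_single k]
      · simp
      · intro i hi hik
        simp only [Finset.mem_range, Nat.lt_succ_iff] at hi
        have : k - i ≠ 0 := by omega
        simp [eval_mul, eval_pow, zero_pow this]
      · intro h; exact absurd (Finset.self_mem_range_succ k) h
    rwa [he] at this

/-- Bernstein's inequality: for a polynomial `Q` of degree `k ≥ 1`, the maximum of `|Q'|` over
the unit circle is at most `k` times the maximum of `|Q|` over the unit circle. -/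
theorem bernstein_inequality (k : ℕ) (hk : 1 ≤ k) (Q : Polynomial ℂ) (hQ : Q.natDegree ≤ k)
    (z : ℂ) (hz : ‖z‖ = 1) :
    ‖(Polynomial.derivative Q).eval z‖ ≤
      (k : ℝ) * sSup {y : ℝ | ∃ w : ℂ, ‖w‖ = 1 ∧ y = ‖Q.eval w‖} := by
  set S := {y : ℝ | ∃ w : ℂ, ‖w‖ = 1 ∧ y = ‖Q.eval w‖} with hS
  set M := sSup S with hMdef
  have hSimg : S = (fun w => ‖Q.eval w‖) '' (Metric.sphere (0:ℂ) 1) := by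
    ext y
    simp only [hS, Set.mem_setOf_eq, Set.mem_image, mem_sphere_zero_iff_norm]
    constructor
    · rintro ⟨w, hw, rfl⟩; exact ⟨w, hw, rfl⟩
    · rintro ⟨w, hw, rfl⟩; exact ⟨w, hw, rfl⟩
  have hbdd : BddAbove S := by
    rw [hSimg]
    exact ((isCompact_sphere (0:ℂ) 1).image
      (continuous_norm.comp Q.continuous)).bddAbove
  have hM : ∀ w : ℂ, ‖w‖ = 1 → ‖Q.eval w‖ ≤ M :=
    fun w hw => le_csSup hbdd ⟨w, hw, rfl⟩
  have hM0 : 0 ≤ M := le_trans (norm_nonneg _) (hM 1 (by simp))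
  by_contra hcon
  push_neg at hcon
  have hz0 : z ≠ 0 := by intro h; simp [h] at hz
  have hk0 : (k:ℂ) ≠ 0 := Nat.cast_ne_zero.mpr (by omega)
  have hden : (k:ℂ) * z^(k-1) ≠ 0 := mul_ne_zero hk0 (pow_ne_zero _ hz0)
  set lam := (derivative Q).eval z / ((k:ℂ) * z^(k-1)) with hlam
  have hlamabs : ‖lam‖ = ‖(derivative Q).eval z‖ / k := by
    rw [hlam, norm_div, norm_mul, norm_pow, hz, one_pow, mul_one, Complex.norm_natCast]
  have hkpos : (0:ℝ) < k := by positivity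
  have hMlam : M < ‖lam‖ := by
    rw [hlamabs, lt_div_iff₀ hkpos]
    linarith [hcon]
  have hgrow := growth_bound k Q hQ M hM
  set P := Q - C lam * X^k with hP
  have hcoeffk : P.coeff k = Q.coeff k - lam := by
    simp [hP, coeff_sub, coeff_C_mul, coeff_X_pow]
  have hck : P.coeff k ≠ 0 := by
    rw [hcoeffk, sub_ne_zero]
    intro h
    rw [← h] at hMlam
    linarith [hgrow.2]
  have hdegle : P.natDegree ≤ k :=
    le_trans (natDegree_sub_le _ _) (max_le hQ (le_trans (natDegree_C_mul_le _ _)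
      (by simp [natDegree_X_pow])))
  have hdeg : P.natDegree = k := le_antisymm hdegle (le_natDegree_of_ne_zero hck)
  have hP0 : P ≠ 0 := fun h => hck (by simp [h])
  have hsplit : P.Splits := IsAlgClosed.splits P
  have hfac : P = C P.leadingCoeff * (P.roots.map fun a => X - C a).prod :=
    hsplit.eq_prod_roots
  have hcard : (Multiset.card P.roots : ℝ) = k := by
    rw [splits_iff_card_roots.mp hsplit, hdeg]
  have hroots : ∀ r ∈ P.roots, ‖r‖ < 1 := by
    intro r hr
    by_contra hge
    push_neg at hge
    have hre : P.eval r = 0 := (mem_roots hP0).mp hr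
    have hQr : Q.eval r = lam * r^k := by
      have h0 : Q.eval r - lam * r^k = 0 := by
        simpa [hP, eval_sub, eval_mul, eval_pow] using hre
      linear_combination h0
    have hb := hgrow.1 r hge
    rw [hQr, norm_mul, norm_pow] at hb
    have hpos : 0 < ‖r‖ ^ k := pow_pos (by linarith) k
    have : ‖lam‖ ≤ M := le_of_mul_le_mul_right (by linarith [hb]) hpos
    linarith
  obtain ⟨hpz, hrez⟩ := roots_re_bound z hz P.roots hroots
  set p := (P.roots.map fun a => X - C a).prod with hpdef
  have hp' : (derivative p).eval z ≠ 0 := by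
    intro h
    rw [h] at hrez
    rw [hcard] at hrez
    simp only [mul_zero, zero_div, Complex.zero_re] at hrez
    have : (1:ℝ) ≤ k := by exact_mod_cast hk
    linarith
  have hc : P.leadingCoeff ≠ 0 := leadingCoeff_ne_zero.mpr hP0
  have hPz' : (derivative P).eval z ≠ 0 := by
    have hdP : derivative P = C P.leadingCoeff * derivative p := by
      conv_lhs => rw [hfac]
      rw [derivative_C_mul]
    rw [hdP, eval_mul, eval_C]
    exact mul_ne_zero hc hp'
  apply hPz'
  have hPd : (derivative P).eval z = (derivative Q).eval z - lam * ((k:ℂ) * z^(k-1)) := by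
    simp only [hP, derivative_sub, derivative_C_mul, derivative_X_pow, eval_sub, eval_mul,
      eval_C, eval_pow, eval_X, eval_natCast]
    try ring
  rw [hPd, hlam, div_mul_cancel₀ _ hden, sub_self]
end

section
/- The function (ψ, z) ↦ ψ − 2 Im(log(1 − z e^{iψ}) − log(1 − z)) is nonnegative on [0, 2π) × D, where D is the open unit complex disk. -/
/-! The imaginary part of `(1 - z e^{iψ}) · conj(1 - z) · e^{-iψ/2}` equals `(|z|² - 1) sin(ψ/2)`,
which is negative for `z ∈ 𝔻` and `0 < ψ < 2π`. In polar form this imaginary part is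
`|1 - z e^{iψ}| |1 - z| sin(t)` with `t = arg(1 - z e^{iψ}) - arg(1 - z) - ψ/2`; both points lie in
the right half plane, so `t < π`, and `sin t < 0` forces `t < 0`, i.e.
`Im(log(1 - z e^{iψ}) - log(1 - z)) < ψ/2`. -/

open Complex ComplexConjugate

lemma im_mul_conj_mul_exp_neg (a b : ℂ) (θ : ℝ) :
    (a * conj b * exp (-(θ * I))).im = ‖a‖ * ‖b‖ * Real.sin (a.arg - b.arg - θ) := by
  have hpolar : a * conj b * exp (-(θ * I)) = ↑(‖a‖ * ‖b‖) * exp (↑(a.arg - b.arg - θ) * I) := by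
    conv_lhs => rw [← norm_mul_exp_arg_mul_I a, ← norm_mul_exp_arg_mul_I b]
    rw [map_mul, ← exp_conj, conj_ofReal, map_mul, conj_ofReal, conj_I]
    push_cast
    rw [sub_mul, sub_mul, sub_eq_add_neg, sub_eq_add_neg, exp_add, exp_add]
    ring_nf
  rw [hpolar, im_ofReal_mul, exp_ofReal_mul_I_im]

lemma im_one_sub_mul_exp_mul_conj_one_sub (z : ℂ) (ψ : ℝ) :
    ((1 - z * exp (I * ψ)) * conj (1 - z) * exp (-(↑(ψ / 2) * I))).im
      = (‖z‖ ^ 2 - 1) * Real.sin (ψ / 2) := by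
  obtain ⟨θ, rfl⟩ : ∃ θ, ψ = 2 * θ := ⟨ψ / 2, by ring⟩
  rw [Complex.sq_norm, mul_div_cancel_left₀ θ two_ne_zero]
  simp only [ofReal_mul, ofReal_ofNat, map_sub, map_one, mul_im, mul_re, sub_re, one_re, exp_re,
    I_re, re_ofNat, ofReal_re, im_ofNat, ofReal_im, mul_zero, sub_zero, zero_mul, I_im, add_zero,
    sub_self, Real.exp_zero, one_mul, zero_add, Real.cos_two_mul, exp_im, Real.sin_two_mul,
    conj_re, sub_im, one_im, zero_sub, neg_add_rev, conj_im, sub_neg_eq_add, neg_re, mul_one,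
    neg_zero, neg_im, Real.sin_neg, mul_neg, Real.cos_neg, normSq_apply]
  linear_combination (-2 * Real.cos θ * z.im) * Real.sin_sq_add_cos_sq θ

lemma arg_sub_arg_lt_pi_of_re_pos {a b : ℂ} (ha : 0 < a.re) (hb : 0 < b.re) :
    a.arg - b.arg < Real.pi := by
  have := abs_lt.mp (abs_arg_lt_pi_div_two_iff.2 (Or.inl ha))
  have := abs_lt.mp (abs_arg_lt_pi_div_two_iff.2 (Or.inl hb))
  linarith

lemma re_one_sub_pos {w : ℂ} (hw : ‖w‖ < 1) : 0 < (1 - w).re := by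
  rw [sub_re, one_re]
  linarith [re_le_norm w]

lemma arg_one_sub_mul_exp_sub_arg_one_sub_lt {ψ : ℝ} (hψ₀ : 0 < ψ) (hψ : ψ < 2 * Real.pi)
    {z : ℂ} (hz : ‖z‖ < 1) :
    (1 - z * exp (I * ψ)).arg - (1 - z).arg < ψ / 2 := by
  set t := (1 - z * exp (I * ψ)).arg - (1 - z).arg - ψ / 2 with ht_def
  have hsin : Real.sin t < 0 := by
    have hneg : (‖z‖ ^ 2 - 1) * Real.sin (ψ / 2) < 0 :=
      mul_neg_of_neg_of_pos (by nlinarith [norm_nonneg z])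
        (Real.sin_pos_of_pos_of_lt_pi (by linarith) (by linarith))
    rw [← im_one_sub_mul_exp_mul_conj_one_sub, im_mul_conj_mul_exp_neg, ← ht_def] at hneg
    exact neg_of_mul_neg_right hneg (by positivity)
  have ht : t ≤ Real.pi := by
    have hrot : ‖z * exp (I * ψ)‖ < 1 := by
      rwa [norm_mul, mul_comm I, norm_exp_ofReal_mul_I, mul_one]
    linarith [ht_def, arg_sub_arg_lt_pi_of_re_pos (re_one_sub_pos hrot) (re_one_sub_pos hz)]
  by_contra! h
  exact hsin.not_ge (Real.sin_nonneg_of_nonneg_of_le_pi (by linarith [ht_def]) ht)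

/-- The function `(ψ, z) ↦ ψ − 2 Im(log(1 − z e^{iψ}) − log(1 − z))` is nonnegative on
`[0, 2π) × 𝔻`, where `𝔻` is the open unit disk. -/
theorem phase_increment_nonneg (ψ : ℝ) (hψ : ψ ∈ Set.Ico (0 : ℝ) (2 * Real.pi))
    (z : ℂ) (hz : ‖z‖ < 1) :
    0 ≤ ψ - 2 * ((Complex.log (1 - z * Complex.exp (Complex.I * (ψ : ℂ)))).im
      - (Complex.log (1 - z)).im) := by
  rw [log_im, log_im]
  rcases hψ.1.eq_or_lt with rfl | hψ₀
  · simp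
  · linarith [arg_one_sub_mul_exp_sub_arg_one_sub_lt hψ₀ hψ.2 hz]
end

section
/- Let λ₁, λ₂ ∈ C, α ∈ R, Γ > 1, and define u(z) = z/√(|z|² + Γ) and F(z) = Re{λ₁ log(1 − u(z)e^{iα}) − λ₁ log(1 − u(z)) + λ₂ log(1 − u(z))}. Then there is an absolute constant C > 0 such that whenever x² + y² = r² ≤ Γ/2: |F(x+iy) + Re{(λ₁(e^{iα} − 1) + λ₂)(x+iy)} Γ^{−1/2}| ≤ C(|λ₁(e^{iα}−1)| + |λ₂|) r² / Γ. -/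
/-!
Write `L(w) = log(1 - w) + w` for the remainder of the first-order expansion of `log(1 - w)`.
Since `L'(w) = -w / (1 - w)`, on the disc `‖w‖ ≤ ρ < 1` the map `L` is `ρ/(1-ρ)`-Lipschitz and
vanishes at `0`. With `u = u(z)`, `e = e^{iα}` and `M = λ₁(e - 1) + λ₂`, the quantity to bound is
the real part of `λ₁(L(ue) - L(u)) + λ₂ L(u) + M(z/√Γ - u)`. The first two terms are
`O(|λ₁(e - 1)| ‖u‖²)` and `O(|λ₂| ‖u‖²)`, with `‖u‖² ≤ r²/Γ`, and the last one is at most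
`‖M‖ r²/(2Γ)` because `1/√Γ - 1/√(r² + Γ) ≤ r/(2Γ)`.
-/

/-- `u(z) = z / √(|z|² + Γ)`. -/
noncomputable def uMap (Γ : ℝ) (z : ℂ) : ℂ := z / ((Real.sqrt (‖z‖ ^ 2 + Γ) : ℝ) : ℂ)

/-- `F(z) = Re(λ₁ log(1 − u(z)e^{iα}) − λ₁ log(1 − u(z)) + λ₂ log(1 − u(z)))`. -/
noncomputable def Fcal (lam1 lam2 : ℂ) (α Γ : ℝ) (z : ℂ) : ℝ :=
  (lam1 * Complex.log (1 - uMap Γ z * Complex.exp ((α : ℂ) * Complex.I))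
    - lam1 * Complex.log (1 - uMap Γ z)
    + lam2 * Complex.log (1 - uMap Γ z)).re

open Complex

noncomputable def logOneSubAddSelf (w : ℂ) : ℂ := log (1 - w) + w

lemma hasDerivAt_logOneSubAddSelf {w : ℂ} (hw : ‖w‖ < 1) :
    HasDerivAt logOneSubAddSelf (-w / (1 - w)) w := by
  have hslit : 1 - w ∈ slitPlane := by
    simpa [sub_eq_add_neg] using mem_slitPlane_of_norm_lt_one (z := -w) (by simpa)
  have hne : 1 - w ≠ 0 := slitPlane_ne_zero hslit
  refine ((((hasDerivAt_id w).const_sub 1).clog hslit).add (hasDerivAt_id w)).congr_deriv ?_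
  simp only [id]
  field_simp
  ring

lemma norm_logOneSubAddSelf_sub_le {ρ : ℝ} (hρ : ρ < 1) {a b : ℂ} (ha : ‖a‖ ≤ ρ)
    (hb : ‖b‖ ≤ ρ) :
    ‖logOneSubAddSelf a - logOneSubAddSelf b‖ ≤ ρ / (1 - ρ) * ‖a - b‖ := by
  refine Convex.norm_image_sub_le_of_norm_hasDerivWithin_le
    (fun w hw => (hasDerivAt_logOneSubAddSelf ?_).hasDerivWithinAt) (fun w hw => ?_)
    (convex_closedBall 0 ρ) (by simpa using hb) (by simpa using ha)
  · exact (mem_closedBall_zero_iff.mp hw).trans_lt hρ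
  · have hw : ‖w‖ ≤ ρ := mem_closedBall_zero_iff.mp hw
    have hden : 1 - ρ ≤ ‖1 - w‖ := by
      have := norm_sub_norm_le (1 : ℂ) w
      rw [norm_one] at this
      linarith
    rw [norm_div, norm_neg]
    exact div_le_div₀ ((norm_nonneg w).trans hw) hw (by linarith) hden

lemma norm_logOneSubAddSelf_le {ρ : ℝ} (hρ : ρ < 1) {w : ℂ} (hw : ‖w‖ ≤ ρ) :
    ‖logOneSubAddSelf w‖ ≤ ρ / (1 - ρ) * ‖w‖ := by
  simpa [logOneSubAddSelf] using
    norm_logOneSubAddSelf_sub_le hρ hw ((norm_zero (E := ℂ)).trans_le ((norm_nonneg w).trans hw))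

lemma norm_uMap_sq (Γ : ℝ) (z : ℂ) (hΓ : 0 ≤ ‖z‖ ^ 2 + Γ) :
    ‖uMap Γ z‖ ^ 2 = ‖z‖ ^ 2 / (‖z‖ ^ 2 + Γ) := by
  rw [uMap, norm_div, norm_real, Real.norm_of_nonneg (Real.sqrt_nonneg _), div_pow,
    Real.sq_sqrt hΓ]

lemma norm_uMap_sq_le {Γ : ℝ} (hΓ : 0 < Γ) (z : ℂ) : ‖uMap Γ z‖ ^ 2 ≤ ‖z‖ ^ 2 / Γ := by
  rw [norm_uMap_sq Γ z (by positivity)]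
  gcongr
  linarith [sq_nonneg ‖z‖]

lemma norm_uMap_le_two_thirds {Γ : ℝ} {z : ℂ} (hz : ‖z‖ ^ 2 ≤ Γ / 2) :
    ‖uMap Γ z‖ ≤ 2 / 3 := by
  have hΓ : 0 ≤ ‖z‖ ^ 2 + Γ := by linarith [sq_nonneg ‖z‖]
  have hsq : ‖uMap Γ z‖ ^ 2 ≤ (2 / 3) ^ 2 := by
    rw [norm_uMap_sq Γ z hΓ]
    exact div_le_of_le_mul₀ hΓ (by norm_num) (by linarith)
  exact (pow_le_pow_iff_left₀ (norm_nonneg _) (by norm_num) two_ne_zero).mp hsq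

lemma norm_div_sqrt_sub_uMap_le {Γ : ℝ} (hΓ : 0 < Γ) (z : ℂ) :
    ‖z / (Real.sqrt Γ : ℂ) - uMap Γ z‖ ≤ ‖z‖ ^ 2 / (2 * Γ) := by
  set r := ‖z‖
  set g := Real.sqrt Γ
  set s := Real.sqrt (r ^ 2 + Γ)
  have hg : 0 < g := Real.sqrt_pos.mpr hΓ
  have hg2 : g ^ 2 = Γ := Real.sq_sqrt hΓ.le
  have hs2 : s ^ 2 = r ^ 2 + Γ := Real.sq_sqrt (by positivity)
  have hr : 0 ≤ r := norm_nonneg z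
  have hgs : g ≤ s := Real.sqrt_le_sqrt (by linarith [sq_nonneg r])
  have hrs : r ≤ s := Real.le_sqrt_of_sq_le (by linarith)
  have hsplit : z / (g : ℂ) - uMap Γ z = ((g⁻¹ - s⁻¹ : ℝ) : ℂ) * z := by
    rw [uMap]; push_cast; ring
  have key : g⁻¹ - s⁻¹ = (s - g) / (g * s) := inv_sub_inv hg.ne' (hg.trans_le hgs).ne'
  have hnn : 0 ≤ g⁻¹ - s⁻¹ := sub_nonneg.2 (inv_anti₀ hg hgs)
  rw [hsplit, norm_mul, norm_real, Real.norm_of_nonneg hnn, key, show ‖z‖ = r from rfl, ← hg2,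
    div_mul_eq_mul_div, div_le_div_iff₀ (by positivity) (by positivity)]
  -- 2g(s - g) ≤ (s - g)(s + g) = r² ≤ r s
  have hrs2 : r * g * r ^ 2 = r * g * (s ^ 2 - g ^ 2) := by rw [hs2, hg2]; ring
  nlinarith [mul_nonneg (mul_nonneg hr hg.le) (mul_nonneg (sub_nonneg.2 hgs) (sub_nonneg.2 hgs)),
    mul_nonneg (mul_nonneg hr hg.le) (mul_nonneg hr (sub_nonneg.2 hrs))]

lemma Fcal_add_re_div_sqrt_eq (lam1 lam2 : ℂ) (α Γ : ℝ) (z : ℂ) :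
    Fcal lam1 lam2 α Γ z
        + ((lam1 * (exp (α * I) - 1) + lam2) * z).re * (Real.sqrt Γ)⁻¹ =
      (lam1 * (logOneSubAddSelf (uMap Γ z * exp (α * I)) - logOneSubAddSelf (uMap Γ z))
        + lam2 * logOneSubAddSelf (uMap Γ z)
        + (lam1 * (exp (α * I) - 1) + lam2) * (z / (Real.sqrt Γ : ℂ) - uMap Γ z)).re := by
  rw [Fcal, mul_comm (re _), ← re_ofReal_mul, ← add_re, ofReal_inv]
  congr 1
  simp only [logOneSubAddSelf]
  ring

lemma abs_Fcal_add_re_div_sqrt_le (lam1 lam2 : ℂ) (α : ℝ) {Γ : ℝ} (hΓ : 0 < Γ) {z : ℂ}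
    (hu : ‖uMap Γ z‖ ≤ 2 / 3) :
    |Fcal lam1 lam2 α Γ z + ((lam1 * (exp (α * I) - 1) + lam2) * z).re * (Real.sqrt Γ)⁻¹|
      ≤ 3 * (‖lam1 * (exp (α * I) - 1)‖ + ‖lam2‖) * ‖uMap Γ z‖ ^ 2
        + ‖lam1 * (exp (α * I) - 1) + lam2‖ * (‖z‖ ^ 2 / (2 * Γ)) := by
  set u := uMap Γ z
  set e := exp (α * I)
  set M := lam1 * (e - 1) + lam2
  set ρ := ‖u‖
  have hρ : ρ / (1 - ρ) ≤ 3 * ρ := by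
    rw [div_le_iff₀ (by linarith)]
    nlinarith [norm_nonneg u]
  have hue : ‖u * e‖ ≤ ρ := by rw [norm_mul, norm_exp_ofReal_mul_I, mul_one]
  have hdiff : ‖logOneSubAddSelf (u * e) - logOneSubAddSelf u‖ ≤ 3 * ρ * (ρ * ‖e - 1‖) :=
    calc _ ≤ ρ / (1 - ρ) * ‖u * e - u‖ := norm_logOneSubAddSelf_sub_le (by linarith) hue le_rfl
      _ ≤ 3 * ρ * (ρ * ‖e - 1‖) := by rw [← mul_sub_one, norm_mul]; gcongr
  have hself : ‖logOneSubAddSelf u‖ ≤ 3 * ρ * ρ :=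
    (norm_logOneSubAddSelf_le (by linarith) le_rfl).trans (by gcongr)
  rw [Fcal_add_re_div_sqrt_eq]
  calc _ ≤ ‖lam1 * (logOneSubAddSelf (u * e) - logOneSubAddSelf u)‖
        + ‖lam2 * logOneSubAddSelf u‖ + ‖M * (z / (Real.sqrt Γ : ℂ) - u)‖ :=
        (abs_re_le_norm _).trans (norm_add₃_le ..)
    _ ≤ ‖lam1‖ * (3 * ρ * (ρ * ‖e - 1‖)) + ‖lam2‖ * (3 * ρ * ρ) + ‖M‖ * (‖z‖ ^ 2 / (2 * Γ)) := by
        simp only [norm_mul]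
        gcongr
        exact norm_div_sqrt_sub_uMap_le hΓ z
    _ = _ := by rw [norm_mul]; ring

/-- First-order Taylor expansion of `F` at `0` with quadratic error: there is an absolute
constant `C > 0` such that whenever `x² + y² = r² ≤ Γ/2`,
`|F(x+iy) + Re((λ₁(e^{iα} − 1) + λ₂)(x+iy)) Γ^{-1/2}| ≤ C(|λ₁(e^{iα}−1)| + |λ₂|) r² / Γ`. -/
theorem calculus_zeroth_order :
    ∃ C : ℝ, 0 < C ∧
      ∀ (lam1 lam2 : ℂ) (α Γ : ℝ), 1 < Γ →
      ∀ x y r : ℝ, x ^ 2 + y ^ 2 = r ^ 2 → r ^ 2 ≤ Γ / 2 →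
      |Fcal lam1 lam2 α Γ ((x : ℂ) + (y : ℂ) * Complex.I)
          + ((lam1 * (Complex.exp ((α : ℂ) * Complex.I) - 1) + lam2)
              * ((x : ℂ) + (y : ℂ) * Complex.I)).re * (Real.sqrt Γ)⁻¹|
        ≤ C * (‖lam1 * (Complex.exp ((α : ℂ) * Complex.I) - 1)‖ + ‖lam2‖)
            * r ^ 2 / Γ := by
  refine ⟨4, by norm_num, fun lam1 lam2 α Γ hΓ x y r hxyr hrΓ => ?_⟩
  set z : ℂ := x + y * I
  have hz : ‖z‖ ^ 2 = r ^ 2 := by rw [Complex.sq_norm, normSq_add_mul_I, hxyr]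
  have hΓ0 : 0 < Γ := by linarith
  set A := ‖lam1 * (exp (α * I) - 1)‖
  set B := ‖lam2‖
  have hM : ‖lam1 * (exp (α * I) - 1) + lam2‖ ≤ A + B := norm_add_le _ _
  have hu := norm_uMap_sq_le hΓ0 z
  refine (abs_Fcal_add_re_div_sqrt_le lam1 lam2 α hΓ0 (norm_uMap_le_two_thirds (hz ▸ hrΓ))).trans ?_
  rw [hz] at hu ⊢
  have hAB : 0 ≤ (A + B) * (r ^ 2 / Γ) := by positivity
  calc _ ≤ 3 * (A + B) * (r ^ 2 / Γ) + (A + B) * (r ^ 2 / (2 * Γ)) := by gcongr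
    _ = 7 / 2 * ((A + B) * (r ^ 2 / Γ)) := by ring
    _ ≤ 4 * ((A + B) * (r ^ 2 / Γ)) := by gcongr; norm_num
    _ = _ := by ring
end
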